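/- arXiv:1808.06647 — 5 statements merged into one kernel-verified Lean document; each statement's English description precedes it below -/
import Mathlib

section
/- For r ∈ (0,1), the maximum of |Re φ(z)| over the closed disc {|z| ≤ r} equals (4/π)·arctan r, where φ is the conformal map from the unit disc onto the strip S with φ(0)=0, φ'(0)>0. -/
open Complex Set

/-- The strip `S = {z : -1 < Re z < 1}`. -/
def stripS : Set ℂ := {z : ℂ | -1 < z.re ∧ z.re < 1}

/-- The unit disc. -/
def discU : Set ℂ := {z : ℂ | ‖z‖ < 1}

/-- Hyperbolic density of the strip. -/
noncomputable def rhoS (z : ℂ) : ℝ := (Real.pi / 2) / Real.cos (Real.pi / 2 * z.re)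

/-- Hyperbolic density of the unit disc. -/
noncomputable def rhoU (z : ℂ) : ℝ := 2 / (1 - ‖z‖ ^ 2)

/-- Hyperbolic length of a curve in the strip. -/
noncomputable def hypLenS (γ : ℝ → ℂ) : ℝ := ∫ t in (0:ℝ)..1, rhoS (γ t) * ‖deriv γ t‖

/-- Hyperbolic length of a curve in the disc. -/
noncomputable def hypLenU (γ : ℝ → ℂ) : ℝ := ∫ t in (0:ℝ)..1, rhoU (γ t) * ‖deriv γ t‖

/-- Hyperbolic distance on the strip: infimum of hyperbolic lengths of C¹ curves. -/
noncomputable def dS (z₁ z₂ : ℂ) : ℝ :=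
  sInf { L : ℝ | ∃ γ : ℝ → ℂ, ContDiffOn ℝ 1 γ (Icc 0 1) ∧ γ 0 = z₁ ∧ γ 1 = z₂ ∧
    (∀ t ∈ Icc (0:ℝ) 1, γ t ∈ stripS) ∧ L = hypLenS γ }

/-- Hyperbolic distance on the unit disc. -/
noncomputable def dU (z₁ z₂ : ℂ) : ℝ :=
  sInf { L : ℝ | ∃ γ : ℝ → ℂ, ContDiffOn ℝ 1 γ (Icc 0 1) ∧ γ 0 = z₁ ∧ γ 1 = z₂ ∧
    (∀ t ∈ Icc (0:ℝ) 1, γ t ∈ discU) ∧ L = hypLenU γ }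

/-- The conformal map of the disc onto the strip, inverse of `z ↦ tan (π z / 4)`. -/
noncomputable def phiUS (z : ℂ) : ℂ :=
  (-(2 * Complex.I) / (Real.pi : ℂ)) * Complex.log ((1 + Complex.I * z) / (1 - Complex.I * z))

/-- Inverse hyperbolic tangent. -/
noncomputable def artanh (r : ℝ) : ℝ := Real.log ((1 + r) / (1 - r)) / 2

/-- A real-valued function is harmonic on a set. -/
def HarmonicOnR (u : ℂ → ℝ) (s : Set ℂ) : Prop :=
  ContDiffOn ℝ 2 u s ∧ ∀ z ∈ s,
    fderiv ℝ (fun w => fderiv ℝ u w 1) z 1 + fderiv ℝ (fun w => fderiv ℝ u w Complex.I) z Complex.I = 0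

/-- A complex-valued function is harmonic on a set. -/
def HarmonicOnC (f : ℂ → ℂ) (s : Set ℂ) : Prop :=
  ContDiffOn ℝ 2 f s ∧ ∀ z ∈ s,
    fderiv ℝ (fun w => fderiv ℝ f w 1) z 1 + fderiv ℝ (fun w => fderiv ℝ f w Complex.I) z Complex.I = 0

/-- Wirtinger derivative ∂f/∂z. -/
noncomputable def wderiv (f : ℂ → ℂ) (z : ℂ) : ℂ :=
  (fderiv ℝ f z 1 - Complex.I * fderiv ℝ f z Complex.I) / 2

/-- Wirtinger derivative ∂f/∂z̄. -/
noncomputable def wderivBar (f : ℂ → ℂ) (z : ℂ) : ℂ :=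
  (fderiv ℝ f z 1 + Complex.I * fderiv ℝ f z Complex.I) / 2

/-- Sense-preserving K-quasiregular C¹ map on a set. -/
def QRegOn (K : ℝ) (f : ℂ → ℂ) (s : Set ℂ) : Prop :=
  ContDiffOn ℝ 1 f s ∧ ∀ z ∈ s,
    ‖wderivBar f z‖ < ‖wderiv f z‖ ∧
    ‖wderiv f z‖ + ‖wderivBar f z‖
      ≤ K * (‖wderiv f z‖ - ‖wderivBar f z‖)

/-!
Since `φ = (4/π) · arctan`, it suffices to bound `Re (arctan z)`. Multiplying numerator and
denominator of `(1 + iz)/(1 - iz)` by the conjugate of the denominator gives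
`Re (arctan z) = ½ · arctan (2 Re z / (1 - |z|²))`, and `|2 Re z| ≤ 2|z|` together with the
doubling formula `arctan (2t/(1 - t²)) = 2 arctan t` bounds its modulus by `arctan |z|`,
with equality at `z = r`.
-/

namespace Complex

open ComplexConjugate

lemma arg_eq_arctan_of_re_pos {w : ℂ} (h : 0 < w.re) : arg w = Real.arctan (w.im / w.re) := by
  have h' := abs_lt.mp (abs_arg_lt_pi_div_two_iff.mpr (Or.inl h))
  rw [← tan_arg, Real.arctan_tan h'.1 h'.2]

lemma one_add_mul_I_mul_conj_one_sub_mul_I (z : ℂ) :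
    (1 + z * I) * conj (1 - z * I) = ⟨1 - ‖z‖ ^ 2, 2 * z.re⟩ := by
  apply Complex.ext <;> simp [Complex.sq_norm, normSq_apply] <;> ring

lemma arg_one_add_mul_I_div_one_sub_mul_I {z : ℂ} (hz : ‖z‖ < 1) :
    arg ((1 + z * I) / (1 - z * I)) = Real.arctan (2 * z.re / (1 - ‖z‖ ^ 2)) := by
  have hne : 1 - z * I ≠ 0 := slitPlane_ne_zero <| by
    simpa [sub_eq_add_neg] using mem_slitPlane_of_norm_lt_one (z := -(z * I)) (by simpa)
  have hpos : 0 < 1 - ‖z‖ ^ 2 := by nlinarith [norm_nonneg z]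
  rw [div_eq_mul_inv, inv_def, ← mul_assoc, one_add_mul_I_mul_conj_one_sub_mul_I,
    arg_mul_real (inv_pos.2 (normSq_pos.2 hne)), arg_eq_arctan_of_re_pos hpos]

lemma re_arctan {z : ℂ} (hz : ‖z‖ < 1) :
    (arctan z).re = Real.arctan (2 * z.re / (1 - ‖z‖ ^ 2)) / 2 := by
  rw [arctan, ← arg_one_add_mul_I_div_one_sub_mul_I hz, mul_re, log_im]
  simp [div_eq_inv_mul]

lemma abs_re_arctan_le {z : ℂ} {r : ℝ} (hz : ‖z‖ ≤ r) (hr : r < 1) :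
    |(arctan z).re| ≤ Real.arctan r := by
  have hz1 : ‖z‖ < 1 := hz.trans_lt hr
  have hpos : 0 < 1 - ‖z‖ ^ 2 := by nlinarith [norm_nonneg z]
  set t := 2 * z.re / (1 - ‖z‖ ^ 2)
  have ht : |t| ≤ 2 * ‖z‖ / (1 - ‖z‖ ^ 2) := by
    rw [abs_div, abs_mul, abs_two, abs_of_pos hpos]
    gcongr
    exact abs_re_le_norm z
  have hdouble : Real.arctan (2 * ‖z‖ / (1 - ‖z‖ ^ 2)) ≤ 2 * Real.arctan r := by
    rw [← Real.two_mul_arctan (by linarith [norm_nonneg z]) hz1]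
    gcongr
  rw [re_arctan hz1, abs_div, abs_two, div_le_iff₀ two_pos]
  refine abs_le.mpr ⟨?_, ?_⟩
  · rw [neg_le, ← Real.arctan_neg]
    exact (Real.arctan_mono ((neg_le_abs t).trans ht)).trans (by linarith)
  · exact (Real.arctan_mono ((le_abs_self t).trans ht)).trans (by linarith)

end Complex

lemma phiUS_eq_arctan (z : ℂ) : phiUS z = (4 / Real.pi : ℝ) * Complex.arctan z := by
  rw [phiUS, Complex.arctan, mul_comm Complex.I z]
  push_cast
  field_simp
  ring

/-- `max {|Re φ(z)| : |z| ≤ r} = (4/π) arctan r`. -/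
theorem max_re_phiUS (r : ℝ) (hr : r ∈ Set.Ioo (0:ℝ) 1) :
    IsGreatest {x : ℝ | ∃ z : ℂ, ‖z‖ ≤ r ∧ x = |(phiUS z).re|}
      ((4 / Real.pi) * Real.arctan r) := by
  have hre (z : ℂ) : (phiUS z).re = 4 / Real.pi * (Complex.arctan z).re := by
    rw [phiUS_eq_arctan, Complex.re_ofReal_mul]
  refine ⟨⟨r, by simp [abs_of_pos hr.1], ?_⟩, ?_⟩
  · have : 0 ≤ Real.arctan r := Real.arctan_nonneg.mpr hr.1.le
    rw [hre, ← Complex.ofReal_arctan, Complex.ofReal_re, abs_of_nonneg (by positivity)]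
  · rintro _ ⟨z, hz, rfl⟩
    rw [hre, abs_mul, abs_of_pos (by positivity)]
    gcongr
    exact Complex.abs_re_arctan_le hz hr.2
end

section
/- For λ > 0, the maximum Euclidean distance from 0 over the closed hyperbolic disc in the strip S centered (hyperbolically) at 0 with hyperbolic radius λ equals (2/π)·λ; i.e., max{|z| : z ∈ S, d_S(z,0) ≤ λ} = 2λ/π. -/
open Complex Set

/-!
On the strip the density `ρ_S` is at least `π/2`, with equality exactly on the imaginary axis.
Hence every curve from `z` to `0` has hyperbolic length at least `(π/2)|z|`, while along the
imaginary axis the straight segment realises this bound, so `d_S(iy, 0) = (π/2)|y|` and the point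
`2iλ/π` attains `|z| = 2λ/π`.
-/

open MeasureTheory AffineMap

section CurveLength

variable {E : Type*} [NormedAddCommGroup E] [NormedSpace ℝ E] {γ : ℝ → E} {ρ : ℝ → ℝ} {a b : ℝ}

theorem ContDiffOn.intervalIntegrable_mul_norm_deriv (hab : a ≤ b)
    (hγ : ContDiffOn ℝ 1 γ (Icc a b)) (hρ : ContinuousOn ρ (Icc a b)) :
    IntervalIntegrable (fun t => ρ t * ‖deriv γ t‖) volume a b := by
  rcases hab.eq_or_lt with rfl | hlt
  · exact IntervalIntegrable.refl
  have hcont : ContinuousOn (fun t => ρ t * ‖derivWithin γ (Icc a b) t‖) (Icc a b) :=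
    hρ.mul (hγ.continuousOn_derivWithin (uniqueDiffOn_Icc hlt) le_rfl).norm
  refine (hcont.intervalIntegrable_of_Icc hab).congr_ae ?_
  rw [uIoc_of_le hab, ← Measure.restrict_congr_set Ioo_ae_eq_Ioc]
  filter_upwards [self_mem_ae_restrict measurableSet_Ioo] with t ht
  rw [derivWithin_of_mem_nhds (Icc_mem_nhds ht.1 ht.2)]

theorem mul_norm_sub_le_integral_mul_norm_deriv {c : ℝ} (hc : 0 < c) (hab : a ≤ b)
    (hγ : ContDiffOn ℝ 1 γ (Icc a b)) (hρ : ContinuousOn ρ (Icc a b))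
    (hρc : ∀ t ∈ Icc a b, c ≤ ρ t) :
    c * ‖γ b - γ a‖ ≤ ∫ t in a..b, ρ t * ‖deriv γ t‖ := by
  have hint := (hγ.intervalIntegrable_mul_norm_deriv hab hρ).const_mul c⁻¹
  have hdisp : ‖γ b - γ a‖ ≤ ∫ t in a..b, c⁻¹ * (ρ t * ‖deriv γ t‖) := by
    refine norm_sub_le_integral_of_norm_deriv_le_of_le hab hγ.continuousOn
      ((hγ.differentiableOn one_ne_zero).mono Ioo_subset_Icc_self) (ae_of_all _ ?_) hint
    intro t ht
    rw [le_inv_mul_iff₀ hc]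
    exact mul_le_mul_of_nonneg_right (hρc t (Ioo_subset_Icc_self ht)) (norm_nonneg _)
  rwa [intervalIntegral.integral_const_mul, le_inv_mul_iff₀ hc] at hdisp

end CurveLength

theorem convex_stripS : Convex ℝ stripS :=
  (convex_Ioo (-1 : ℝ) 1).linear_preimage Complex.reLm

theorem cos_pos_of_mem_stripS {z : ℂ} (hz : z ∈ stripS) : 0 < Real.cos (Real.pi / 2 * z.re) := by
  obtain ⟨h1, h2⟩ := hz
  apply Real.cos_pos_of_mem_Ioo
  constructor <;> nlinarith [Real.pi_pos]

theorem continuousOn_rhoS : ContinuousOn rhoS stripS :=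
  continuousOn_const.div (by fun_prop) fun _ hz => (cos_pos_of_mem_stripS hz).ne'

theorem pi_div_two_le_rhoS {z : ℂ} (hz : z ∈ stripS) : Real.pi / 2 ≤ rhoS z :=
  le_div_self (by positivity) (cos_pos_of_mem_stripS hz) (Real.cos_le_one _)

theorem rhoS_of_re_eq_zero {z : ℂ} (hz : z.re = 0) : rhoS z = Real.pi / 2 := by
  simp [rhoS, hz]

theorem pi_div_two_mul_norm_sub_le_hypLenS {γ : ℝ → ℂ} (hγ : ContDiffOn ℝ 1 γ (Icc 0 1))
    (hS : ∀ t ∈ Icc (0 : ℝ) 1, γ t ∈ stripS) :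
    Real.pi / 2 * ‖γ 1 - γ 0‖ ≤ hypLenS γ :=
  mul_norm_sub_le_integral_mul_norm_deriv (by positivity) zero_le_one hγ
    (continuousOn_rhoS.comp hγ.continuousOn hS) fun t ht => pi_div_two_le_rhoS (hS t ht)

theorem re_lineMap_eq_zero {z w : ℂ} (hz : z.re = 0) (hw : w.re = 0) (t : ℝ) :
    (lineMap z w t : ℂ).re = 0 := by
  simp [lineMap_apply_module, hz, hw]

theorem hypLenS_lineMap_of_re_eq_zero {z w : ℂ} (hz : z.re = 0) (hw : w.re = 0) :
    hypLenS (lineMap z w) = Real.pi / 2 * ‖w - z‖ := by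
  simp [hypLenS, hasDerivAt_lineMap.deriv, rhoS_of_re_eq_zero (re_lineMap_eq_zero hz hw _)]

theorem dS_le_hypLenS {γ : ℝ → ℂ} (hγ : ContDiffOn ℝ 1 γ (Icc 0 1))
    (hS : ∀ t ∈ Icc (0 : ℝ) 1, γ t ∈ stripS) : dS (γ 0) (γ 1) ≤ hypLenS γ := by
  refine csInf_le ⟨0, ?_⟩ ⟨γ, hγ, rfl, rfl, hS, rfl⟩
  rintro L ⟨δ, hδ, -, -, hδS, rfl⟩
  exact (by positivity : 0 ≤ Real.pi / 2 * ‖δ 1 - δ 0‖).trans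
    (pi_div_two_mul_norm_sub_le_hypLenS hδ hδS)

theorem pi_div_two_mul_norm_sub_le_dS {z w : ℂ} (hz : z ∈ stripS) (hw : w ∈ stripS) :
    Real.pi / 2 * ‖w - z‖ ≤ dS z w := by
  refine le_csInf ⟨_, lineMap z w, (contDiff_lineMap z w).contDiffOn, by simp, by simp,
    fun t ht => convex_stripS.lineMap_mem hz hw ht, rfl⟩ ?_
  rintro L ⟨γ, hγ, rfl, rfl, hS, rfl⟩
  exact pi_div_two_mul_norm_sub_le_hypLenS hγ hS

theorem dS_of_re_eq_zero {z w : ℂ} (hz : z.re = 0) (hw : w.re = 0) :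
    dS z w = Real.pi / 2 * ‖w - z‖ := by
  have mem {u : ℂ} (hu : u.re = 0) : u ∈ stripS := by simp [stripS, hu]
  refine le_antisymm ?_ (pi_div_two_mul_norm_sub_le_dS (mem hz) (mem hw))
  have h := dS_le_hypLenS (γ := lineMap z w) (contDiff_lineMap z w).contDiffOn
    fun t _ => mem (re_lineMap_eq_zero hz hw t)
  simpa [hypLenS_lineMap_of_re_eq_zero hz hw] using h

/-- `max {|z| : z ∈ S, d_S(z,0) ≤ λ} = 2λ/π`. -/
theorem max_abs_hyperbolic_disc (lam : ℝ) (hlam : 0 < lam) :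
    IsGreatest {x : ℝ | ∃ z ∈ stripS, dS z 0 ≤ lam ∧ x = ‖z‖}
      (2 * lam / Real.pi) := by
  have hpi := Real.pi_pos
  set r := 2 * lam / Real.pi
  have hr : 0 ≤ r := by positivity
  have hnorm : ‖Complex.I * r‖ = r := by simp [abs_of_nonneg hr]
  refine ⟨⟨Complex.I * r, by simp [stripS], ?_, hnorm.symm⟩, ?_⟩
  · rw [dS_of_re_eq_zero (by simp) rfl, zero_sub, norm_neg, hnorm]
    exact (by simp only [r]; field_simp : Real.pi / 2 * r = lam).le
  · rintro x ⟨w, hw, hd, rfl⟩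
    have h := (pi_div_two_mul_norm_sub_le_dS hw (by simp [stripS])).trans hd
    rw [zero_sub, norm_neg] at h
    rw [le_div_iff₀ hpi]
    linarith
end

section
/- (Schwarz lemma for harmonic functions) If u : U → (-1,1) is harmonic on the unit disc with u(0) = 0, then |u(z)| ≤ (4/π)·arctan|z| for all z ∈ U. -/
open Complex Set

/-! A harmonic `u` on the disc is the real part of a holomorphic `F` with `F 0 = 0`. Since
`π F / 4` takes values in the strip `|Re w| < π / 4`, which `tan` maps into the unit disc, the
Schwarz lemma applies to `tan (π F / 4)` and gives `‖tan (π F z / 4)‖ ≤ ‖z‖`. On that strip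
`tan |Re w| ≤ ‖tan w‖`, hence `tan (π |u z| / 4) ≤ ‖z‖`. -/

open Metric InnerProductSpace

lemma discU_eq_ball : discU = ball 0 1 := by
  ext; simp [discU]

lemma HarmonicOnR.harmonicOnNhd {u : ℂ → ℝ} {s : Set ℂ} (hs : IsOpen s)
    (hu : HarmonicOnR u s) : HarmonicOnNhd u s := by
  have hC2 : ∀ y ∈ s, ContDiffAt ℝ 2 u y := fun y hy => (hu.1 y hy).contDiffAt (hs.mem_nhds hy)
  refine fun x hx => ⟨hC2 x hx, ?_⟩
  filter_upwards [hs.mem_nhds hx] with y hy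
  have hd : DifferentiableAt ℝ (fderiv ℝ u) y :=
    ((hC2 y hy).fderiv_right (m := 1) le_rfl).differentiableAt one_ne_zero
  have hpartial : ∀ v, fderiv ℝ (fun w => fderiv ℝ u w v) y v = fderiv ℝ (fderiv ℝ u) y v v :=
    fun v => by simp [fderiv_clm_apply hd (differentiableAt_const v)]
  simpa [laplacian_eq_iteratedFDeriv_complexPlane, iteratedFDeriv_two_apply, hpartial]
    using hu.2 y hy

lemma Real.sin_sq_lt_cos_sq {x : ℝ} (hx : |x| < Real.pi / 4) : sin x ^ 2 < cos x ^ 2 := by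
  have : 0 < cos (2 * x) := cos_pos_of_mem_Ioo
    ⟨by linarith [neg_abs_le x, pi_pos], by linarith [le_abs_self x, pi_pos]⟩
  linarith [cos_two_mul' x]

namespace Complex

lemma normSq_sin (z : ℂ) : normSq (sin z) = Real.sin z.re ^ 2 + Real.sinh z.im ^ 2 := by
  rw [sin_eq, ← ofReal_sin, ← ofReal_cos, ← ofReal_cosh, ← ofReal_sinh, ← ofReal_mul,
    ← ofReal_mul, normSq_add_mul_I]
  nlinarith [Real.sin_sq_add_cos_sq z.re, Real.cosh_sq z.im]

lemma normSq_cos (z : ℂ) : normSq (cos z) = Real.cos z.re ^ 2 + Real.sinh z.im ^ 2 := by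
  rw [cos_eq, ← ofReal_sin, ← ofReal_cos, ← ofReal_cosh, ← ofReal_sinh, ← ofReal_mul,
    ← ofReal_mul, sub_eq_add_neg, ← neg_mul, ← ofReal_neg, normSq_add_mul_I]
  nlinarith [Real.sin_sq_add_cos_sq z.re, Real.cosh_sq z.im]

lemma sq_norm_tan (z : ℂ) : ‖tan z‖ ^ 2 = normSq (sin z) / normSq (cos z) := by
  rw [tan_eq_sin_div_cos, norm_div, div_pow, Complex.sq_norm, Complex.sq_norm]

lemma normSq_sin_lt_normSq_cos {z : ℂ} (hz : |z.re| < Real.pi / 4) :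
    normSq (sin z) < normSq (cos z) := by
  rw [normSq_sin, normSq_cos]
  linarith [Real.sin_sq_lt_cos_sq hz]

lemma cos_ne_zero_of_abs_re_lt {z : ℂ} (hz : |z.re| < Real.pi / 4) : cos z ≠ 0 := by
  intro h
  have := normSq_sin_lt_normSq_cos hz
  rw [h, map_zero] at this
  exact (normSq_nonneg _).not_gt this

lemma norm_tan_lt_one {z : ℂ} (hz : |z.re| < Real.pi / 4) : ‖tan z‖ < 1 := by
  rw [← sq_lt_one_iff₀ (norm_nonneg _), sq_norm_tan,
    div_lt_one (normSq_pos.2 (cos_ne_zero_of_abs_re_lt hz))]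
  exact normSq_sin_lt_normSq_cos hz

lemma tan_abs_re_le_norm_tan {z : ℂ} (hz : |z.re| < Real.pi / 4) :
    Real.tan |z.re| ≤ ‖tan z‖ := by
  have hpi := Real.pi_pos
  have hcos : 0 < Real.cos z.re :=
    Real.cos_pos_of_mem_Ioo ⟨by linarith [neg_abs_le z.re], by linarith [le_abs_self z.re]⟩
  have htan : 0 ≤ Real.tan |z.re| :=
    Real.tan_nonneg_of_nonneg_of_le_pi_div_two (abs_nonneg _) (by linarith)
  have htan_sq : Real.tan |z.re| ^ 2 = Real.sin z.re ^ 2 / Real.cos z.re ^ 2 := by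
    rcases abs_choice z.re with h | h <;> rw [h] <;> simp [Real.tan_eq_sin_div_cos, div_pow]
  refine (sq_le_sq₀ htan (norm_nonneg _)).1 ?_
  rw [sq_norm_tan, normSq_sin, normSq_cos, htan_sq,
    div_le_div_iff₀ (by positivity) (by positivity)]
  -- `a / b ≤ (a + s) / (b + s)` for `a ≤ b` and `s ≥ 0`
  nlinarith [Real.sin_sq_lt_cos_sq hz, sq_nonneg (Real.sinh z.im)]

end Complex

theorem abs_re_le_four_div_pi_mul_arctan_norm {F : ℂ → ℂ}
    (hF : DifferentiableOn ℂ F (ball 0 1)) (hre : ∀ w ∈ ball (0 : ℂ) 1, |(F w).re| < 1)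
    (h0 : F 0 = 0) {z : ℂ} (hz : z ∈ ball (0 : ℂ) 1) : |(F z).re| ≤ 4 / Real.pi * Real.arctan ‖z‖ := by
  have hpi := Real.pi_pos
  set c : ℂ := ((Real.pi / 4 : ℝ) : ℂ)
  have hscale : ∀ w, |(c * F w).re| = Real.pi / 4 * |(F w).re| := fun w => by
    rw [re_ofReal_mul, abs_mul, abs_of_pos (by positivity)]
  have hstrip : ∀ w ∈ ball (0 : ℂ) 1, |(c * F w).re| < Real.pi / 4 :=
    fun w hw => by nlinarith [hscale w, hre w hw]
  have hψ : DifferentiableOn ℂ (fun w => tan (c * F w)) (ball 0 1) := fun w hw =>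
    (DifferentiableAt.comp (g := tan) w
      (differentiableAt_tan.2 (cos_ne_zero_of_abs_re_lt (hstrip w hw)))
      ((hF.differentiableAt (isOpen_ball.mem_nhds hw)).const_mul c)).differentiableWithinAt
  have hschwarz : ‖tan (c * F z)‖ ≤ ‖z‖ := Complex.norm_le_norm_of_mapsTo_ball hψ
    (fun w hw => mem_closedBall_zero_iff.2 (norm_tan_lt_one (hstrip w hw)).le) (by simp [h0])
    (mem_ball_zero_iff.1 hz)
  have htan : Real.tan (Real.pi / 4 * |(F z).re|) ≤ ‖z‖ :=
    hscale z ▸ (tan_abs_re_le_norm_tan (hstrip z hz)).trans hschwarz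
  have harctan := Real.arctan_strictMono.monotone htan
  rw [Real.arctan_tan (by nlinarith [abs_nonneg (F z).re]) (by nlinarith [hre z hz])]
    at harctan
  rw [div_mul_eq_mul_div, le_div_iff₀ hpi]
  linarith

/-- Schwarz lemma for harmonic functions `u : U → (-1,1)` with `u 0 = 0`. -/
theorem schwarz_harmonic (u : ℂ → ℝ) (hu : HarmonicOnR u discU)
    (hmap : ∀ z ∈ discU, u z ∈ Set.Ioo (-1 : ℝ) 1) (h0 : u 0 = 0) :
    ∀ z ∈ discU, |u z| ≤ (4 / Real.pi) * Real.arctan (‖z‖) := by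
  rw [discU_eq_ball] at hu hmap ⊢
  obtain ⟨F, hF, hFu⟩ := (hu.harmonicOnNhd isOpen_ball).exists_analyticOnNhd_ball_re_eq
  have hF0 : (F 0).re = 0 := (hFu (mem_ball_self one_pos)).trans h0
  have hGu : ∀ z ∈ ball (0 : ℂ) 1, (F z - F 0).re = u z := fun z hz => by
    simp [hF0, ← hFu hz]
  intro z hz
  rw [← hGu z hz]
  refine abs_re_le_four_div_pi_mul_arctan_norm (hF.differentiableOn.sub_const _)
    (fun w hw => ?_) (sub_self _) hz
  rw [hGu w hw]
  exact abs_lt.2 (hmap w hw)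
end

section
/- (Schwarz lemma for holomorphic maps into the strip) If f : U → S is holomorphic with f(0) = 0, where S = {z : -1 < Re z < 1}, then |f(z)| ≤ (4/π)·artanh|z| for all z ∈ U. -/
open Complex Set

/-!
For `|Re w| < π / 4` we have `‖tan w‖ < 1`, so `g = tan (π f / 4)` maps the disc into itself
and fixes `0`; by the Schwarz lemma `‖g z‖ ≤ ‖z‖`. Inverting, `π f / 4 = arctan g`, and comparing
the Taylor series of `arctan` termwise with that of `artanh` gives `‖arctan u‖ ≤ artanh ‖u‖`;
monotonicity of `artanh` concludes.
-/

open scoped Real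

theorem Real.hasSum_artanh {x : ℝ} (hx : |x| < 1) :
    HasSum (fun n : ℕ => x ^ (2 * n + 1) / (2 * n + 1)) (Real.artanh x) := by
  obtain ⟨hx₁, hx₂⟩ := abs_lt.mp hx
  have hterm : (fun n : ℕ => x ^ (2 * n + 1) / (2 * n + 1)) =
      fun n : ℕ => 1 / 2 * (2 * (1 / (2 * n + 1)) * x ^ (2 * n + 1)) := by
    ext n
    ring
  rw [artanh_eq_half_log ⟨hx₁.le, hx₂.le⟩, log_div (by linarith) (by linarith), hterm]
  exact (hasSum_log_sub_log_of_abs_lt_one hx).mul_left (1 / 2)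

theorem artanh_eq_real_artanh {r : ℝ} (hr : r ∈ Icc (-1) 1) : artanh r = Real.artanh r := by
  rw [Real.artanh_eq_half_log hr, artanh]
  ring

namespace Complex

theorem sq_norm_sin (w : ℂ) : ‖sin w‖ ^ 2 = Real.sin w.re ^ 2 + Real.sinh w.im ^ 2 := by
  rw [Complex.sq_norm, sin_eq, ← ofReal_sin, ← ofReal_cosh, ← ofReal_cos, ← ofReal_sinh,
    ← ofReal_mul, ← ofReal_mul, normSq_add_mul_I, mul_pow, mul_pow, Real.cosh_sq]
  nlinarith [Real.sin_sq_add_cos_sq w.re]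

theorem sq_norm_cos (w : ℂ) : ‖cos w‖ ^ 2 = Real.cos w.re ^ 2 + Real.sinh w.im ^ 2 := by
  rw [Complex.sq_norm, cos_eq, ← ofReal_sin, ← ofReal_cosh, ← ofReal_cos, ← ofReal_sinh,
    ← ofReal_mul, ← ofReal_mul, sub_eq_add_neg, ← neg_mul, ← ofReal_neg, normSq_add_mul_I,
    neg_sq, mul_pow, mul_pow, Real.cosh_sq]
  nlinarith [Real.sin_sq_add_cos_sq w.re]

-- `‖cos w‖ ^ 2 - ‖sin w‖ ^ 2 = cos (2 * w.re)`
theorem norm_sin_lt_norm_cos {w : ℂ} (hw : |w.re| < π / 4) : ‖sin w‖ < ‖cos w‖ := by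
  have hcos : 0 < Real.cos (2 * w.re) := by
    apply Real.cos_pos_of_mem_Ioo
    constructor <;> linarith [abs_lt.mp hw]
  refine lt_of_pow_lt_pow_left₀ 2 (norm_nonneg _) ?_
  rw [sq_norm_sin, sq_norm_cos]
  nlinarith [Real.cos_two_mul w.re, Real.sin_sq_add_cos_sq w.re]

theorem norm_tan_lt_one_s15 {w : ℂ} (hw : |w.re| < π / 4) : ‖tan w‖ < 1 := by
  have h := norm_sin_lt_norm_cos hw
  rw [tan_eq_sin_div_cos, norm_div, div_lt_one ((norm_nonneg _).trans_lt h)]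
  exact h

theorem differentiableAt_tan_of_abs_re_lt {w : ℂ} (hw : |w.re| < π / 4) :
    DifferentiableAt ℂ tan w :=
  differentiableAt_tan.mpr (norm_pos_iff.mp ((norm_nonneg _).trans_lt (norm_sin_lt_norm_cos hw)))

theorem norm_arctan_le_artanh {z : ℂ} (hz : ‖z‖ < 1) : ‖arctan z‖ ≤ Real.artanh ‖z‖ :=
  (hasSum_arctan hz).norm_le_of_bounded (Real.hasSum_artanh (by rwa [abs_norm])) fun n => by
    rw [norm_div, norm_mul, norm_pow, norm_neg, norm_one, one_pow, one_mul, norm_pow,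
      Complex.norm_natCast]
    push_cast
    rfl

theorem norm_le_artanh_norm_tan {w : ℂ} (hw : |w.re| < π / 4) :
    ‖w‖ ≤ Real.artanh ‖tan w‖ := by
  obtain ⟨hw₁, hw₂⟩ := abs_lt.mp hw
  have hw_ne : w ≠ π / 2 := fun h => by
    rw [h, ← ofReal_ofNat, ← ofReal_div, ofReal_re] at hw₂
    linarith [Real.pi_pos]
  calc ‖w‖ = ‖arctan (tan w)‖ := by rw [arctan_tan hw_ne (by linarith) (by linarith)]
    _ ≤ Real.artanh ‖tan w‖ := norm_arctan_le_artanh (norm_tan_lt_one_s15 hw)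

end Complex

theorem abs_re_pi_div_four_mul_lt {w : ℂ} (hw : w ∈ stripS) : |(π / 4 * w).re| < π / 4 := by
  have hre : (π / 4 * w).re = π / 4 * w.re := by
    rw [← ofReal_ofNat, ← ofReal_div, re_ofReal_mul]
  rw [hre, abs_mul, abs_of_pos (by positivity), mul_lt_iff_lt_one_right (by positivity), abs_lt]
  exact hw

/-- Schwarz lemma for holomorphic maps of the disc into the strip. -/
theorem schwarz_holomorphic_strip (f : ℂ → ℂ) (hf : DifferentiableOn ℂ f discU)
    (hmap : Set.MapsTo f discU stripS) (h0 : f 0 = 0) :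
    ∀ z ∈ discU, ‖f z‖ ≤ (4 / Real.pi) * artanh (‖z‖) := by
  have hdisc : discU = Metric.ball 0 1 := by
    ext w
    simp [discU]
  rw [hdisc] at hf hmap ⊢
  have hre : ∀ w ∈ Metric.ball (0 : ℂ) 1, |(π / 4 * f w).re| < π / 4 := fun w hw =>
    abs_re_pi_div_four_mul_lt (hmap hw)
  set g : ℂ → ℂ := fun w => tan (π / 4 * f w)
  have hg_diff : DifferentiableOn ℂ g (Metric.ball 0 1) := fun w hw =>
    (differentiableAt_tan_of_abs_re_lt (hre w hw)).comp_differentiableWithinAt (g := tan) w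
      ((hf w hw).const_mul (π / 4))
  have hg_maps : MapsTo g (Metric.ball 0 1) (Metric.closedBall 0 1) := fun w hw =>
    mem_closedBall_zero_iff.mpr (norm_tan_lt_one_s15 (hre w hw)).le
  have hg0 : g 0 = 0 := by simp [g, h0]
  intro z hz
  have hz₁ : ‖z‖ < 1 := mem_ball_zero_iff.mp hz
  calc ‖f z‖ = 4 / π * ‖π / 4 * f z‖ := by
        rw [norm_mul, ← ofReal_ofNat, ← ofReal_div, norm_real, Real.norm_of_nonneg (by positivity)]
        field_simp
    _ ≤ 4 / π * Real.artanh ‖g z‖ := by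
        gcongr
        exact norm_le_artanh_norm_tan (hre z hz)
    _ ≤ 4 / π * Real.artanh ‖z‖ := by
        gcongr
        exact Real.artanh_le_artanh (by linarith [norm_nonneg (g z)]) hz₁
          (norm_le_norm_of_mapsTo_ball hg_diff hg_maps hg0 hz₁)
    _ = 4 / π * artanh ‖z‖ := by
        rw [artanh_eq_real_artanh ⟨by linarith [norm_nonneg z], hz₁.le⟩]
end

section
/- The bound |f(z)| ≤ (4/π)·artanh|z| for holomorphic f : U → S with f(0)=0 is sharp: for each z ∈ U there is a holomorphic f̂ : U → S with f̂(0)=0 and |f̂(z)| = (4/π)·artanh|z|. -/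
open Complex Set

/-!
`phiUS` maps the disc holomorphically into the strip: `w ↦ (1 + I w) / (1 - I w)` sends the
disc into the right half-plane, where `arg` stays in `(-π/2, π/2)`. On the imaginary axis it is
explicit, `phiUS (I r) = -(2 I / π) log ((1 - r) / (1 + r))`, so
`‖phiUS (I r)‖ = (4 / π) artanh r` for `0 ≤ r < 1`. Precomposing with the rotation that carries
`z` to `I ‖z‖` gives the extremal map.
-/

open scoped Real

lemma one_sub_ne_zero_of_norm_lt_one {w : ℂ} (hw : ‖w‖ < 1) : 1 - w ≠ 0 := by
  rintro h
  rw [← sub_eq_zero.mp h, norm_one] at hw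
  exact lt_irrefl _ hw

lemma re_one_add_div_one_sub_pos {w : ℂ} (hw : ‖w‖ < 1) : 0 < ((1 + w) / (1 - w)).re := by
  have hsq : w.re ^ 2 + w.im ^ 2 < 1 := by
    have := Complex.sq_norm w
    rw [Complex.normSq_apply] at this
    nlinarith [norm_nonneg w]
  have hden : 0 < Complex.normSq (1 - w) :=
    Complex.normSq_pos.mpr (one_sub_ne_zero_of_norm_lt_one hw)
  rw [Complex.div_re, ← add_div]
  apply div_pos _ hden
  simp only [Complex.add_re, Complex.add_im, Complex.sub_re, Complex.sub_im,
    Complex.one_re, Complex.one_im]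
  nlinarith

lemma norm_mul_lt_one_of_norm_le_one {c w : ℂ} (hc : ‖c‖ ≤ 1) (hw : ‖w‖ < 1) :
    ‖c * w‖ < 1 :=
  calc ‖c * w‖ = ‖c‖ * ‖w‖ := norm_mul c w
    _ ≤ ‖w‖ := mul_le_of_le_one_left (norm_nonneg w) hc
    _ < 1 := hw

lemma mapsTo_mul_discU {c : ℂ} (hc : ‖c‖ ≤ 1) : MapsTo (c * ·) discU discU :=
  fun _ hw => norm_mul_lt_one_of_norm_le_one hc hw

lemma re_one_add_I_mul_div_one_sub_I_mul_pos {w : ℂ} (hw : w ∈ discU) :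
    0 < ((1 + I * w) / (1 - I * w)).re :=
  re_one_add_div_one_sub_pos (norm_mul_lt_one_of_norm_le_one (by simp) hw)

lemma differentiableOn_phiUS : DifferentiableOn ℂ phiUS discU := by
  intro w hw
  have hIw : ‖I * w‖ < 1 := norm_mul_lt_one_of_norm_le_one (by simp) hw
  have hq : DifferentiableAt ℂ (fun w => (1 + I * w) / (1 - I * w)) w :=
    ((differentiableAt_const _).add (differentiableAt_id.const_mul I)).div
      ((differentiableAt_const _).sub (differentiableAt_id.const_mul I))
      (one_sub_ne_zero_of_norm_lt_one hIw)
  have hslit := Complex.mem_slitPlane_iff.mpr (Or.inl (re_one_add_I_mul_div_one_sub_I_mul_pos hw))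
  exact ((hq.clog hslit).const_mul _).differentiableWithinAt

lemma re_phiUS (w : ℂ) :
    (phiUS w).re = 2 / π * arg ((1 + I * w) / (1 - I * w)) := by
  have hcoef : -(2 * I) / (π : ℂ) = ((-(2 / π) : ℝ) : ℂ) * I := by push_cast; ring
  rw [phiUS, hcoef, mul_assoc, Complex.re_ofReal_mul, Complex.I_mul_re, Complex.log_im]
  ring

lemma mapsTo_phiUS : MapsTo phiUS discU stripS := by
  intro w hw
  have harg := Complex.abs_arg_lt_pi_div_two_iff.mpr
    (Or.inl (re_one_add_I_mul_div_one_sub_I_mul_pos hw))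
  have hre : |(phiUS w).re| < 1 := by
    rw [re_phiUS, abs_mul, abs_of_pos (by positivity : (0:ℝ) < 2 / π)]
    calc 2 / π * |arg ((1 + I * w) / (1 - I * w))| < 2 / π * (π / 2) := by gcongr
      _ = 1 := by field_simp
  exact abs_lt.mp hre

@[simp] lemma phiUS_zero : phiUS 0 = 0 := by simp [phiUS]

lemma norm_phiUS_I_mul {r : ℝ} (hr₀ : 0 ≤ r) (hr₁ : r < 1) :
    ‖phiUS (I * r)‖ = 4 / π * artanh r := by
  have hq : (1 + I * (I * r)) / (1 - I * (I * r)) = (((1 - r) / (1 + r) : ℝ) : ℂ) := by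
    rw [← mul_assoc, I_mul_I]
    push_cast
    ring
  have hpos : 0 < (1 - r) / (1 + r) := div_pos (by linarith) (by linarith)
  have hlog : Real.log ((1 - r) / (1 + r)) = -Real.log ((1 + r) / (1 - r)) := by
    rw [← Real.log_inv, inv_div]
  have hnonneg : 0 ≤ Real.log ((1 + r) / (1 - r)) :=
    Real.log_nonneg ((one_le_div (by linarith)).mpr (by linarith))
  rw [phiUS, hq, ← Complex.ofReal_log hpos.le, norm_mul, norm_div, Complex.norm_real, hlog]
  simp only [norm_neg, Complex.norm_mul, norm_ofNat, norm_I, mul_one, Real.norm_eq_abs,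
    abs_of_pos Real.pi_pos, ofReal_neg, norm_real, abs_of_nonneg hnonneg, artanh]
  ring

lemma exists_norm_eq_one_mul_eq_I_mul_norm (z : ℂ) :
    ∃ c : ℂ, ‖c‖ = 1 ∧ c * z = I * ‖z‖ := by
  refine ⟨I * exp (-arg z * I), by simp [← Complex.ofReal_neg], ?_⟩
  have h : exp (-arg z * I) * exp (arg z * I) = 1 := by
    rw [← Complex.exp_add]
    simp
  linear_combination
    (-(I * exp (-arg z * I))) * Complex.norm_mul_exp_arg_mul_I z + (I * ‖z‖) * h

/-- sharpness of the Schwarz lemma for holomorphic maps into the strip. -/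
theorem schwarz_holomorphic_strip_sharp (z : ℂ) (hz : z ∈ discU) :
    ∃ f : ℂ → ℂ, DifferentiableOn ℂ f discU ∧ Set.MapsTo f discU stripS ∧ f 0 = 0 ∧
      ‖f z‖ = (4 / Real.pi) * artanh (‖z‖) := by
  obtain ⟨c, hc, hcz⟩ := exists_norm_eq_one_mul_eq_I_mul_norm z
  refine ⟨fun ζ => phiUS (c * ζ),
    differentiableOn_phiUS.comp (differentiableOn_id.const_mul c) (mapsTo_mul_discU hc.le),
    mapsTo_phiUS.comp (mapsTo_mul_discU hc.le), by simp, ?_⟩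
  show ‖phiUS (c * z)‖ = _
  rw [hcz]
  exact norm_phiUS_I_mul (norm_nonneg z) hz
end
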